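/- arXiv:1610.09753 — 2 statements merged into one kernel-verified Lean document; each statement's English description precedes it below -/
import Mathlib

section
/- Let h : [0,∞) → ℝ be differentiable and nonnegative with h'(u) ≥ −h(u)/(1+u) for all u ≥ 0. Let γ > 0, L > 0 and u₀ ≥ 0 satisfy 16·h(0) ≥ γ·u₀ + L². Then: if u₀ ≥ 1 one has h(u₀) ≥ γ/32, and if u₀ ≤ 1 one has h(u₀) ≥ L²/32. -/
/-!
The differential inequality `h' ≥ -h / (1 + u)` says exactly that `(1 + u) h(u)` is
nondecreasing, so `(1 + u₀) h(u₀) ≥ h(0) ≥ (γ u₀ + L²) / 16`. Dividing by `1 + u₀`, which is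
at most `2 u₀` when `u₀ ≥ 1` and at most `2` when `u₀ ≤ 1`, gives the two bounds.
-/

open Set

theorem monotoneOn_mul_one_add_of_hasDerivAt {h h' : ℝ → ℝ}
    (hdiff : ∀ u : ℝ, 0 ≤ u → HasDerivAt h (h' u) u)
    (hODE : ∀ u : ℝ, 0 ≤ u → h' u ≥ -(h u) / (1 + u)) :
    MonotoneOn (fun u => h u * (1 + u)) (Ici 0) := by
  have hderiv : ∀ u : ℝ, 0 ≤ u →
      HasDerivAt (fun u => h u * (1 + u)) (h' u * (1 + u) + h u * 1) u :=
    fun u hu => (hdiff u hu).mul ((hasDerivAt_id u).const_add 1)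
  refine monotoneOn_of_hasDerivWithinAt_nonneg (convex_Ici 0)
    (fun u hu => (hderiv u hu).continuousAt.continuousWithinAt)
    (fun u hu => (hderiv u (interior_subset hu)).hasDerivWithinAt) fun u hu => ?_
  have hu : 0 ≤ u := interior_subset hu
  have := (div_le_iff₀ (by linarith : (0 : ℝ) < 1 + u)).mp (hODE u hu)
  linarith

theorem expander_flow_lower_bound_general (h h' : ℝ → ℝ)
    (hdiff : ∀ u : ℝ, 0 ≤ u → HasDerivAt h (h' u) u)
    (hODE : ∀ u : ℝ, 0 ≤ u → h' u ≥ -(h u) / (1 + u))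
    (γ L u₀ : ℝ) (hγ : 0 < γ) (hu₀ : 0 ≤ u₀)
    (hinit : 16 * h 0 ≥ γ * u₀ + L ^ 2) :
    (1 ≤ u₀ → h u₀ ≥ γ / 32) ∧ (u₀ ≤ 1 → h u₀ ≥ L ^ 2 / 32) := by
  have hgrowth : h 0 ≤ h u₀ * (1 + u₀) := by
    simpa using monotoneOn_mul_one_add_of_hasDerivAt hdiff hODE self_mem_Ici hu₀ hu₀
  have hL2 : 0 ≤ L ^ 2 := sq_nonneg L
  constructor
  · intro hu₁
    nlinarith
  · intro hu₁
    nlinarith [mul_nonneg hγ.le hu₀]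

/-- Quantitative lower conclusion of Lemma 5.5 (inclusion of sublevel sets under the
expander flow), abstracted to real functions. -/
theorem expander_flow_lower_bound (h h' : ℝ → ℝ)
    (hdiff : ∀ u : ℝ, 0 ≤ u → HasDerivAt h (h' u) u)
    (hnonneg : ∀ u : ℝ, 0 ≤ u → 0 ≤ h u)
    (hODE : ∀ u : ℝ, 0 ≤ u → h' u ≥ -(h u) / (1 + u))
    (γ L u₀ : ℝ) (hγ : 0 < γ) (hL : 0 < L) (hu₀ : 0 ≤ u₀)
    (hinit : 16 * h 0 ≥ γ * u₀ + L ^ 2) :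
    (1 ≤ u₀ → h u₀ ≥ γ / 32) ∧ (u₀ ≤ 1 → h u₀ ≥ L ^ 2 / 32) :=
  expander_flow_lower_bound_general h h' hdiff hODE γ L u₀ hγ hu₀ hinit
end

section
/- Let C ≥ 0 and γ, L > 0 with γ ≥ L² ≥ 32·C. Let u₀ ≥ 0 and let h, p : [0,u₀] → ℝ be functions such that h is differentiable, h(u) − C ≤ p(u) ≤ h(u) for all u ∈ [0,u₀], h'(u) = −p(u)/(1+u) for all u ∈ [0,u₀], and h(0) ≤ (9/16)·(γ·u₀ + L²). Then h(u₀) ≤ 2γ. -/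
/-!
The quantity `(1 + u) * h u - C * u` is nonincreasing, because its derivative is
`h u - p u - C ≤ 0`. Hence `(1 + u₀) * h u₀ ≤ h 0 + C * u₀`, and the initial bound together
with `32 * C ≤ L ^ 2 ≤ γ` makes the right-hand side at most `2 * γ * (1 + u₀)`.
-/

open Set

section FlowMonotone

variable {h p : ℝ → ℝ} {C : ℝ}

theorem hasDerivAt_one_add_mul_sub {u : ℝ} (hu : 1 + u ≠ 0)
    (hh : HasDerivAt h (-(p u) / (1 + u)) u) :
    HasDerivAt (fun v => (1 + v) * h v - C * v) (h u - p u - C) u := by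
  have hlin : HasDerivAt (fun v : ℝ => 1 + v) 1 u := (hasDerivAt_id u).const_add 1
  refine ((hlin.mul hh).sub ((hasDerivAt_id u).const_mul C)).congr_deriv ?_
  rw [mul_div_cancel₀ _ hu]
  ring

theorem antitoneOn_one_add_mul_sub {a b : ℝ} (ha : -1 < a)
    (hlow : ∀ u ∈ Icc a b, h u - C ≤ p u)
    (hODE : ∀ u ∈ Icc a b, HasDerivAt h (-(p u) / (1 + u)) u) :
    AntitoneOn (fun v => (1 + v) * h v - C * v) (Icc a b) := by
  have hderiv : ∀ u ∈ Icc a b,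
      HasDerivAt (fun v => (1 + v) * h v - C * v) (h u - p u - C) u := fun u hu =>
    hasDerivAt_one_add_mul_sub (by linarith [hu.1]) (hODE u hu)
  refine antitoneOn_of_hasDerivWithinAt_nonpos (convex_Icc a b)
    (fun u hu => (hderiv u hu).continuousAt.continuousWithinAt)
    (fun u hu => (hderiv u (interior_subset hu)).hasDerivWithinAt) fun u hu => ?_
  linarith [hlow u (interior_subset hu)]

end FlowMonotone

theorem expander_flow_upper_bound_general (C γ L u₀ : ℝ) (hγL : γ ≥ L ^ 2) (hLC : L ^ 2 ≥ 32 * C)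
    (hu₀ : 0 ≤ u₀) (h p : ℝ → ℝ)
    (hbound : ∀ u ∈ Set.Icc (0:ℝ) u₀, h u - C ≤ p u ∧ p u ≤ h u)
    (hODE : ∀ u ∈ Set.Icc (0:ℝ) u₀, HasDerivAt h (-(p u) / (1 + u)) u)
    (hinit : h 0 ≤ (9 / 16) * (γ * u₀ + L ^ 2)) :
    h u₀ ≤ 2 * γ := by
  have hflow : (1 + u₀) * h u₀ - C * u₀ ≤ (1 + 0) * h 0 - C * 0 :=
    antitoneOn_one_add_mul_sub (by norm_num) (fun u hu => (hbound u hu).1) hODE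
      (left_mem_Icc.mpr hu₀) (right_mem_Icc.mpr hu₀) hu₀
  have hγ : 0 ≤ γ := le_trans (sq_nonneg L) hγL
  have hCu₀ : C * u₀ ≤ γ / 32 * u₀ := mul_le_mul_of_nonneg_right (by linarith) hu₀
  have hγu₀ : 0 ≤ γ * u₀ := mul_nonneg hγ hu₀
  refine le_of_mul_le_mul_left ?_ (by linarith : (0:ℝ) < 1 + u₀)
  linarith

/-- Quantitative upper conclusion of Lemma 5.5 of the paper, abstracted to real
functions. -/
theorem expander_flow_upper_bound (C γ L u₀ : ℝ) (hC : 0 ≤ C)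
    (hγ : 0 < γ) (hL : 0 < L) (hγL : γ ≥ L ^ 2) (hLC : L ^ 2 ≥ 32 * C)
    (hu₀ : 0 ≤ u₀) (h p : ℝ → ℝ)
    (hbound : ∀ u ∈ Set.Icc (0:ℝ) u₀, h u - C ≤ p u ∧ p u ≤ h u)
    (hODE : ∀ u ∈ Set.Icc (0:ℝ) u₀, HasDerivAt h (-(p u) / (1 + u)) u)
    (hinit : h 0 ≤ (9 / 16) * (γ * u₀ + L ^ 2)) :
    h u₀ ≤ 2 * γ :=
  expander_flow_upper_bound_general C γ L u₀ hγL hLC hu₀ h p hbound hODE hinit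
end
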